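/- arXiv:1102.5245 — 5 statements merged into one kernel-verified Lean document; each statement's English description precedes it below -/
import Mathlib

section
/- Let (χ,ρ) be a complete separable metric space and let P be a Markov transition kernel on χ admitting a density p with respect to a σ-finite measure λ, i.e. P(x,dz) = p(x,z) λ(dz) with p jointly measurable. Let π be a probability measure that is stationary for P (πP = π) and let μ be an arbitrary probability measure on χ. If there is a constant A ≥ 0 such that ∫_χ |p(x,z) − p(y,z)| λ(dz) ≤ A ρ(x,y) for all x, y ∈ χ, then for every n ≥ 1, d_TV(μP^n, π) ≤ (A/2) · d_W(μP^{n−1}, π). -/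
/-!
For a measurable set `s`, the function `x ↦ P(x, s)` is `A/2`-Lipschitz: both `p(x, ·)` and
`p(y, ·)` have mass one, so `|P(x, s) - P(y, s)| ≤ ½ ∫ |p(x, z) - p(y, z)| λ(dz) ≤ (A/2) ρ(x, y)`.
Since `μPⁿ(s) - π(s) = ∫ P(x, s) (μPⁿ⁻¹ - π)(dx)` by stationarity, integrating
`P(x, s) - P(y, s)` against any coupling `M` of `μPⁿ⁻¹` and `π` bounds it by `(A/2) ∫ ρ dM`.
-/

open MeasureTheory ProbabilityTheory
open scoped ENNReal

/-- Total variation distance between two measures: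
the supremum over measurable sets `A` of `|μ A - ν A|`. -/
noncomputable def tvDist {χ : Type*} [MeasurableSpace χ] (μ ν : Measure χ) : ℝ :=
  ⨆ A : {s : Set χ // MeasurableSet s}, |(μ A.1).toReal - (ν A.1).toReal|

/-- Wasserstein distance: the infimum over couplings `M` of `μ` and `ν`
of the expected distance `∫ ρ(x,y) M(dx,dy)`. -/
noncomputable def wassersteinDist {χ : Type*} [MeasurableSpace χ] [PseudoEMetricSpace χ]
    (μ ν : Measure χ) : ℝ≥0∞ :=
  ⨅ (M : Measure (χ × χ)) (_ : M.map Prod.fst = μ ∧ M.map Prod.snd = ν),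
    ∫⁻ q, edist q.1 q.2 ∂M

/-- `iterateKernel P μ n` is the distribution `μ Pⁿ` of a Markov chain with
transition kernel `P` and initial distribution `μ` after `n` steps. -/
noncomputable def iterateKernel {χ : Type*} [MeasurableSpace χ]
    (P : χ → Measure χ) (μ : Measure χ) : ℕ → Measure χ
  | 0 => μ
  | n + 1 => (iterateKernel P μ n).bind P

section Densities

variable {χ : Type*} [MeasurableSpace χ] {lam : Measure χ}

lemma abs_setIntegral_sub_le_half_integral_abs_sub {g₁ g₂ : χ → ℝ}
    (h₁ : Integrable g₁ lam) (h₂ : Integrable g₂ lam)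
    (heq : ∫ z, g₁ z ∂lam = ∫ z, g₂ z ∂lam) {s : Set χ} (hs : MeasurableSet s) :
    |(∫ z in s, g₁ z ∂lam) - ∫ z in s, g₂ z ∂lam| ≤ (∫ z, |g₁ z - g₂ z| ∂lam) / 2 := by
  have hd : Integrable (fun z => g₁ z - g₂ z) lam := h₁.sub h₂
  -- `|∫_s (g₁ - g₂)| = |∫_{sᶜ} (g₁ - g₂)|`, and these two add up to at most `∫ |g₁ - g₂|`
  have hsplit : (∫ z in s, (g₁ z - g₂ z) ∂lam) + ∫ z in sᶜ, (g₁ z - g₂ z) ∂lam = 0 := by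
    rw [integral_add_compl hs hd, integral_sub h₁ h₂, heq, sub_self]
  have hsplit_abs : (∫ z in s, |g₁ z - g₂ z| ∂lam) + ∫ z in sᶜ, |g₁ z - g₂ z| ∂lam
      = ∫ z, |g₁ z - g₂ z| ∂lam := integral_add_compl hs hd.abs
  have hs_le := abs_integral_le_integral_abs (μ := lam.restrict s) (f := fun z => g₁ z - g₂ z)
  have hsc_le := abs_integral_le_integral_abs (μ := lam.restrict sᶜ) (f := fun z => g₁ z - g₂ z)
  rw [← integral_sub h₁.restrict h₂.restrict]
  rw [eq_neg_of_add_eq_zero_right hsplit, abs_neg] at hsc_le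
  linarith

lemma toReal_withDensity_ofReal_apply {g : χ → ℝ} (hg : Measurable g)
    {s : Set χ} (hs : MeasurableSet s) :
    (lam.withDensity (fun z => ENNReal.ofReal (g z)) s).toReal = ∫ z in s, max (g z) 0 ∂lam := by
  rw [withDensity_apply _ hs, ← integral_toReal hg.ennreal_ofReal.aemeasurable
    (ae_of_all _ fun _ => ENNReal.ofReal_lt_top)]
  simp only [ENNReal.toReal_ofReal']

lemma integrable_max_zero_of_withDensity_ofReal {g : χ → ℝ} (hg : Measurable g)
    [IsFiniteMeasure (lam.withDensity fun z => ENNReal.ofReal (g z))] :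
    Integrable (fun z => max (g z) 0) lam := by
  have hfin : ∫⁻ z, ENNReal.ofReal (g z) ∂lam ≠ ∞ := by
    simpa [withDensity_apply _ MeasurableSet.univ] using
      measure_ne_top (lam.withDensity fun z => ENNReal.ofReal (g z)) Set.univ
  simpa only [ENNReal.toReal_ofReal'] using
    integrable_toReal_of_lintegral_ne_top hg.ennreal_ofReal.aemeasurable hfin

lemma ofReal_abs_withDensity_ofReal_sub_le_half_lintegral {g₁ g₂ : χ → ℝ}
    (hg₁ : Measurable g₁) (hg₂ : Measurable g₂)
    [IsProbabilityMeasure (lam.withDensity fun z => ENNReal.ofReal (g₁ z))]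
    [IsProbabilityMeasure (lam.withDensity fun z => ENNReal.ofReal (g₂ z))]
    {s : Set χ} (hs : MeasurableSet s) :
    ENNReal.ofReal |(lam.withDensity (fun z => ENNReal.ofReal (g₁ z)) s).toReal
        - (lam.withDensity (fun z => ENNReal.ofReal (g₂ z)) s).toReal|
      ≤ (∫⁻ z, ENNReal.ofReal |g₁ z - g₂ z| ∂lam) / 2 := by
  have hi₁ := integrable_max_zero_of_withDensity_ofReal (lam := lam) hg₁
  have hi₂ := integrable_max_zero_of_withDensity_ofReal (lam := lam) hg₂
  have htotal : ∀ {g : χ → ℝ}, Measurable g →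
      IsProbabilityMeasure (lam.withDensity fun z => ENNReal.ofReal (g z)) →
      ∫ z, max (g z) 0 ∂lam = 1 := fun {g} hg _ => by
    simpa [Measure.restrict_univ] using
      (toReal_withDensity_ofReal_apply (lam := lam) hg MeasurableSet.univ).symm
  have hi_abs : Integrable (fun z => |max (g₁ z) 0 - max (g₂ z) 0|) lam := (hi₁.sub hi₂).abs
  rw [toReal_withDensity_ofReal_apply hg₁ hs, toReal_withDensity_ofReal_apply hg₂ hs]
  calc ENNReal.ofReal |(∫ z in s, max (g₁ z) 0 ∂lam) - ∫ z in s, max (g₂ z) 0 ∂lam|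
      ≤ ENNReal.ofReal ((∫ z, |max (g₁ z) 0 - max (g₂ z) 0| ∂lam) / 2) :=
        ENNReal.ofReal_le_ofReal <| abs_setIntegral_sub_le_half_integral_abs_sub hi₁ hi₂
          (by rw [htotal hg₁ inferInstance, htotal hg₂ inferInstance]) hs
    _ = (∫⁻ z, ENNReal.ofReal |max (g₁ z) 0 - max (g₂ z) 0| ∂lam) / 2 := by
        rw [ENNReal.ofReal_div_of_pos two_pos, ENNReal.ofReal_ofNat,
          ofReal_integral_eq_lintegral_ofReal hi_abs (ae_of_all _ fun _ => abs_nonneg _)]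
    _ ≤ (∫⁻ z, ENNReal.ofReal |g₁ z - g₂ z| ∂lam) / 2 := by
        gcongr (∫⁻ z, ENNReal.ofReal ?_ ∂lam) / 2 with z
        exact abs_max_sub_max_le_abs _ _ _

lemma measurable_withDensity_ofReal [SFinite lam] {p : χ → χ → ℝ}
    (hp : Measurable (Function.uncurry p)) :
    Measurable fun x => lam.withDensity fun z => ENNReal.ofReal (p x z) := by
  have hf : Measurable (Function.uncurry fun x z => ENNReal.ofReal (p x z)) := hp.ennreal_ofReal
  have hκ : ⇑(Kernel.withDensity (Kernel.const χ lam) fun x z => ENNReal.ofReal (p x z))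
      = fun x => lam.withDensity fun z => ENNReal.ofReal (p x z) :=
    funext fun x => by rw [Kernel.withDensity_apply _ hf, Kernel.const_apply]
  exact hκ ▸ Kernel.measurable _

lemma lipschitzWith_toReal_withDensity_ofReal_apply [PseudoMetricSpace χ] {p : χ → χ → ℝ}
    (hp : ∀ x, Measurable (p x))
    [∀ x, IsProbabilityMeasure (lam.withDensity fun z => ENNReal.ofReal (p x z))] {A : ℝ}
    (hLip : ∀ x y, ∫⁻ z, ENNReal.ofReal |p x z - p y z| ∂lam ≤ ENNReal.ofReal (A * dist x y))
    {s : Set χ} (hs : MeasurableSet s) :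
    LipschitzWith (A / 2).toNNReal
      fun x => (lam.withDensity (fun z => ENNReal.ofReal (p x z)) s).toReal := by
  intro x y
  rw [edist_dist, Real.dist_eq]
  calc _ ≤ (∫⁻ z, ENNReal.ofReal |p x z - p y z| ∂lam) / 2 :=
        ofReal_abs_withDensity_ofReal_sub_le_half_lintegral (hp x) (hp y) hs
    _ ≤ ENNReal.ofReal (A * dist x y) / 2 := by gcongr; exact hLip x y
    _ = ENNReal.ofReal (A / 2) * edist x y := by
        rw [edist_dist, ← ENNReal.ofReal_mul' dist_nonneg, ← ENNReal.ofReal_ofNat 2,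
          ← ENNReal.ofReal_div_of_pos two_pos, div_mul_eq_mul_div]

end Densities

section Coupling

variable {χ : Type*} [MeasurableSpace χ]

lemma ofReal_abs_integral_sub_le_lintegral_edist [PseudoMetricSpace χ] [OpensMeasurableSpace χ]
    {f : χ → ℝ} {K : NNReal}
    (hf : LipschitzWith K f) {ν₁ ν₂ : Measure χ} (h₁ : Integrable f ν₁) (h₂ : Integrable f ν₂)
    {M : Measure (χ × χ)} (hM₁ : M.map Prod.fst = ν₁) (hM₂ : M.map Prod.snd = ν₂) :
    ENNReal.ofReal |∫ x, f x ∂ν₁ - ∫ x, f x ∂ν₂| ≤ K * ∫⁻ q, edist q.1 q.2 ∂M := by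
  subst hM₁ hM₂
  have hf₁ : Integrable (fun q : χ × χ => f q.1) M := h₁.comp_measurable measurable_fst
  have hf₂ : Integrable (fun q : χ × χ => f q.2) M := h₂.comp_measurable measurable_snd
  rw [integral_map measurable_fst.aemeasurable hf.continuous.aestronglyMeasurable,
    integral_map measurable_snd.aemeasurable hf.continuous.aestronglyMeasurable,
    ← integral_sub hf₁ hf₂,
    ← Real.enorm_eq_ofReal_abs,
    ← lintegral_const_mul' _ _ ENNReal.coe_ne_top]
  calc ‖∫ q, f q.1 - f q.2 ∂M‖ₑ ≤ ∫⁻ q, ‖f q.1 - f q.2‖ₑ ∂M := enorm_integral_le_lintegral_enorm _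
    _ ≤ ∫⁻ q, K * edist q.1 q.2 ∂M := lintegral_mono fun q => by
        simpa only [← edist_eq_enorm_sub] using hf q.1 q.2

lemma le_mul_wassersteinDist [PseudoEMetricSpace χ] {ν₁ ν₂ : Measure χ} [IsProbabilityMeasure ν₁]
    [IsProbabilityMeasure ν₂] {a : ℝ≥0∞} {K : NNReal}
    (h : ∀ M : Measure (χ × χ), M.map Prod.fst = ν₁ → M.map Prod.snd = ν₂ →
      a ≤ K * ∫⁻ q, edist q.1 q.2 ∂M) :
    a ≤ K * wassersteinDist ν₁ ν₂ := by
  rcases eq_or_ne K 0 with rfl | hK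
  -- an empty infimum would be `∞`, and `0 * ∞ = 0`; the product coupling rules this out
  · simpa using h (ν₁.prod ν₂) (by simp) (by simp)
  rw [wassersteinDist, ENNReal.mul_iInf_of_ne (by simpa using hK) ENNReal.coe_ne_top]
  refine le_iInf fun M => ?_
  rw [ENNReal.mul_iInf_of_ne (by simpa using hK) ENNReal.coe_ne_top]
  exact le_iInf fun hM => h M hM.1 hM.2

end Coupling

lemma ofReal_tvDist_le {χ : Type*} [MeasurableSpace χ] {μ ν : Measure χ} {c : ℝ≥0∞}
    (h : ∀ s, MeasurableSet s → ENNReal.ofReal |(μ s).toReal - (ν s).toReal| ≤ c) :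
    ENNReal.ofReal (tvDist μ ν) ≤ c := by
  rcases eq_or_ne c ∞ with rfl | hc
  · exact le_top
  rw [ENNReal.ofReal_le_iff_le_toReal hc]
  exact Real.iSup_le (fun s => (ENNReal.ofReal_le_iff_le_toReal hc).1 (h s.1 s.2))
    ENNReal.toReal_nonneg

section Markov

variable {χ : Type*} [MeasurableSpace χ] {P : χ → Measure χ}

lemma isProbabilityMeasure_iterateKernel (hP : Measurable P)
    [∀ x, IsProbabilityMeasure (P x)] (μ : Measure χ) [IsProbabilityMeasure μ] :
    ∀ n, IsProbabilityMeasure (iterateKernel P μ n)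
  | 0 => ‹_›
  | n + 1 =>
    have := isProbabilityMeasure_iterateKernel hP μ n
    isProbabilityMeasure_bind hP.aemeasurable (ae_of_all _ inferInstance)

lemma integrable_toReal_apply (hP : Measurable P) [∀ x, IsProbabilityMeasure (P x)]
    (ν : Measure χ) [IsFiniteMeasure ν] {s : Set χ} (hs : MeasurableSet s) :
    Integrable (fun x => (P x s).toReal) ν :=
  .of_bound ((Measure.measurable_coe hs).comp hP).ennreal_toReal.aestronglyMeasurable 1
    (ae_of_all _ fun x => by simpa using ENNReal.toReal_mono ENNReal.one_ne_top prob_le_one)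

lemma toReal_bind_apply (hP : Measurable P) [∀ x, IsFiniteMeasure (P x)]
    (ν : Measure χ) {s : Set χ} (hs : MeasurableSet s) :
    ((ν.bind P) s).toReal = ∫ x, (P x s).toReal ∂ν := by
  have hPs : Measurable fun x => P x s := (Measure.measurable_coe hs).comp hP
  rw [Measure.bind_apply hs hP.aemeasurable,
    integral_toReal hPs.aemeasurable (ae_of_all _ fun x => measure_lt_top _ _)]

theorem ofReal_tvDist_bind_le_mul_wassersteinDist [PseudoMetricSpace χ] [OpensMeasurableSpace χ]
    (hP : Measurable P) [∀ x, IsProbabilityMeasure (P x)] {K : NNReal}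
    (hK : ∀ s, MeasurableSet s → LipschitzWith K fun x => (P x s).toReal)
    (ν₁ ν₂ : Measure χ) [IsProbabilityMeasure ν₁] [IsProbabilityMeasure ν₂] :
    ENNReal.ofReal (tvDist (ν₁.bind P) (ν₂.bind P)) ≤ K * wassersteinDist ν₁ ν₂ := by
  refine le_mul_wassersteinDist fun M hM₁ hM₂ => ofReal_tvDist_le fun s hs => ?_
  rw [toReal_bind_apply hP ν₁ hs, toReal_bind_apply hP ν₂ hs]
  exact ofReal_abs_integral_sub_le_lintegral_edist (hK s hs)
    (integrable_toReal_apply hP ν₁ hs) (integrable_toReal_apply hP ν₂ hs) hM₁ hM₂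

end Markov

theorem stmt0_general {χ : Type*} [MeasurableSpace χ] [MetricSpace χ] [BorelSpace χ]
    (lam : Measure χ) [SigmaFinite lam]
    (p : χ → χ → ℝ) (hp : Measurable (Function.uncurry p))
    (P : χ → Measure χ)
    (hP : ∀ x, P x = lam.withDensity (fun z => ENNReal.ofReal (p x z)))
    (hMarkov : ∀ x, IsProbabilityMeasure (P x))
    (π μ : Measure χ) [IsProbabilityMeasure π] [IsProbabilityMeasure μ]
    (hstat : π.bind P = π)
    (A : ℝ)
    (hLip : ∀ x y, ∫⁻ z, ENNReal.ofReal |p x z - p y z| ∂lam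
      ≤ ENNReal.ofReal (A * dist x y))
    (n : ℕ) (hn : 1 ≤ n) :
    ENNReal.ofReal (tvDist (iterateKernel P μ n) π)
      ≤ ENNReal.ofReal (A / 2) * wassersteinDist (iterateKernel P μ (n - 1)) π := by
  have hPm : Measurable P := by
    rw [funext hP]
    exact measurable_withDensity_ofReal hp
  have hK : ∀ s, MeasurableSet s → LipschitzWith (A / 2).toNNReal fun x => (P x s).toReal := by
    intro s hs
    have : ∀ x, IsProbabilityMeasure (lam.withDensity fun z => ENNReal.ofReal (p x z)) :=
      fun x => hP x ▸ hMarkov x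
    simp_rw [hP]
    exact lipschitzWith_toReal_withDensity_ofReal_apply (fun _ => hp.of_uncurry_left) hLip hs
  obtain ⟨m, rfl⟩ : ∃ m, n = m + 1 := ⟨n - 1, by omega⟩
  have := isProbabilityMeasure_iterateKernel hPm μ m
  have := ofReal_tvDist_bind_le_mul_wassersteinDist hPm hK (iterateKernel P μ m) π
  rwa [hstat, ← Nat.add_sub_cancel m 1] at this

/-- If the transition densities satisfy
`∫ |p(x,z) − p(y,z)| λ(dz) ≤ A ρ(x,y)`, then
`d_TV(μPⁿ, π) ≤ (A/2) d_W(μPⁿ⁻¹, π)` for all `n ≥ 1`. -/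
theorem stmt0 {χ : Type*} [MeasurableSpace χ] [MetricSpace χ] [BorelSpace χ]
    [CompleteSpace χ] [TopologicalSpace.SeparableSpace χ]
    (lam : Measure χ) [SigmaFinite lam]
    (p : χ → χ → ℝ) (hp : Measurable (Function.uncurry p))
    (P : χ → Measure χ)
    (hP : ∀ x, P x = lam.withDensity (fun z => ENNReal.ofReal (p x z)))
    (hMarkov : ∀ x, IsProbabilityMeasure (P x))
    (π μ : Measure χ) [IsProbabilityMeasure π] [IsProbabilityMeasure μ]
    (hstat : π.bind P = π)
    (A : ℝ) (hA : 0 ≤ A)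
    (hLip : ∀ x y, ∫⁻ z, ENNReal.ofReal |p x z - p y z| ∂lam
      ≤ ENNReal.ofReal (A * dist x y))
    (n : ℕ) (hn : 1 ≤ n) :
    ENNReal.ofReal (tvDist (iterateKernel P μ n) π)
      ≤ ENNReal.ofReal (A / 2) * wassersteinDist (iterateKernel P μ (n - 1)) π :=
  stmt0_general lam p hp P hP hMarkov π μ hstat A hLip n hn
end

section
/- Let Z be a standard Normal random variable and let a, b be positive real numbers. Then the total variation distance between the laws of Z/√a and Z/√b (i.e., between the centered Gaussian measures on ℝ with variances 1/a and 1/b) satisfies d_TV(Z/√a, Z/√b) ≤ |a − b| / max{a, b}. -/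
/-!
If `v ≤ w`, the Gaussian densities satisfy `√(v/w) · φ_v ≤ φ_w` pointwise: the normalising
constants differ by exactly that factor and the exponential factor of `φ_w` is the larger one.
A lower bound `c · ν ≤ μ` between probability measures gives `d_TV(μ, ν) ≤ 1 - c` (apply it to
`A` and to `Aᶜ`), and for `a ≤ b` we have `1 - √(a/b) ≤ 1 - a/b = |a - b| / max a b`.
-/

open MeasureTheory ProbabilityTheory
open scoped ENNReal

open Real NNReal

lemma tvDist_comm {χ : Type*} [MeasurableSpace χ] (μ ν : Measure χ) :
    tvDist μ ν = tvDist ν μ := by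
  simp only [tvDist, abs_sub_comm]

lemma tvDist_le_one_sub_of_smul_le {χ : Type*} [MeasurableSpace χ] {μ ν : Measure χ}
    [IsProbabilityMeasure μ] [IsProbabilityMeasure ν] {c : ℝ≥0}
    (h : ∀ s, MeasurableSet s → (c : ℝ≥0∞) * ν s ≤ μ s) :
    tvDist μ ν ≤ 1 - c := by
  have hreal : ∀ s, MeasurableSet s → c * ν.real s ≤ μ.real s := fun s hs => by
    simpa [measureReal_def, ENNReal.toReal_mul] using
      ENNReal.toReal_mono (measure_ne_top μ s) (h s hs)
  have hc : (c : ℝ) ≤ 1 := by simpa using hreal _ MeasurableSet.univ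
  refine ciSup_le fun ⟨s, hs⟩ => ?_
  have hsc := hreal sᶜ hs.compl
  rw [probReal_compl_eq_one_sub hs, probReal_compl_eq_one_sub hs] at hsc
  have hs_le := hreal s hs
  have hν_le : ν.real s ≤ 1 := measureReal_le_one
  have hν_nonneg : 0 ≤ ν.real s := measureReal_nonneg
  change |μ.real s - ν.real s| ≤ 1 - c
  rw [abs_le]
  constructor <;> nlinarith

lemma sqrt_div_mul_gaussianPDFReal_le (m : ℝ) {v w : ℝ≥0} (hv : v ≠ 0) (hvw : v ≤ w) (x : ℝ) :
    √(v / w) * gaussianPDFReal m v x ≤ gaussianPDFReal m w x := by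
  have hv' : (0 : ℝ) < v := NNReal.coe_pos.mpr (pos_iff_ne_zero.mpr hv)
  have hw' : (0 : ℝ) < w := hv'.trans_le hvw
  have hcoef : √(v / w) * (√(2 * π * v))⁻¹ = (√(2 * π * w))⁻¹ := by
    rw [← Real.sqrt_inv, ← Real.sqrt_inv, ← sqrt_mul (by positivity)]
    congr 1
    field_simp
  rw [gaussianPDFReal, gaussianPDFReal, ← mul_assoc, hcoef, neg_div, neg_div]
  gcongr

lemma sqrt_div_mul_gaussianReal_le (m : ℝ) {v w : ℝ≥0} (hvw : v ≤ w) (s : Set ℝ) :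
    (NNReal.sqrt (v / w) : ℝ≥0∞) * gaussianReal m v s ≤ gaussianReal m w s := by
  rcases eq_or_ne v 0 with rfl | hv
  · simp
  have hw : w ≠ 0 := (pos_iff_ne_zero.mpr hv |>.trans_le hvw).ne'
  rw [gaussianReal_apply _ hv, gaussianReal_apply _ hw,
    ← lintegral_const_mul' _ _ ENNReal.coe_ne_top]
  refine lintegral_mono fun x => ?_
  rw [gaussianPDF, gaussianPDF, ← ENNReal.ofReal_coe_nnreal, ← ENNReal.ofReal_mul (by positivity)]
  exact ENNReal.ofReal_le_ofReal (by simpa using sqrt_div_mul_gaussianPDFReal_le m hv hvw x)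

lemma tvDist_gaussianReal_le (m : ℝ) {v w : ℝ≥0} (hvw : v ≤ w) :
    tvDist (gaussianReal m w) (gaussianReal m v) ≤ 1 - √(v / w) := by
  simpa using tvDist_le_one_sub_of_smul_le fun s _ => sqrt_div_mul_gaussianReal_le m hvw s

/-- For `Z` standard Normal and `a, b > 0`,
`d_TV(Z/√a, Z/√b) ≤ |a − b| / max{a, b}`; the law of `Z/√a` is the centered
Gaussian measure with variance `1/a`. -/
theorem stmt4 (a b : ℝ) (ha : 0 < a) (hb : 0 < b) :
    tvDist (gaussianReal 0 (1 / a).toNNReal) (gaussianReal 0 (1 / b).toNNReal)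
      ≤ |a - b| / max a b := by
  wlog hab : a ≤ b generalizing a b
  · rw [tvDist_comm, abs_sub_comm, max_comm]
    exact this b a hb ha (le_of_not_ge hab)
  have hvw : (1 / b).toNNReal ≤ (1 / a).toNNReal := by gcongr
  have hratio : ((1 / b).toNNReal / (1 / a).toNNReal : ℝ) = a / b := by
    rw [Real.coe_toNNReal _ (by positivity), Real.coe_toNNReal _ (by positivity)]
    field_simp
  calc tvDist _ _ ≤ 1 - √(a / b) := hratio ▸ tvDist_gaussianReal_le 0 hvw
    _ ≤ 1 - a / b := by gcongr; exact le_sqrt_self_iff.mpr ((div_le_one hb).mpr hab)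
    _ = |a - b| / max a b := by
      rw [abs_of_nonpos (by linarith), max_eq_right hab]; field_simp; ring
end

section
/- Let Z be a standard Normal random variable and let t be a real number. Then the total variation distance between the laws of Z and Z + t (i.e., between the Gaussian measures N(0,1) and N(t,1)) satisfies d_TV(Z, Z + t) ≤ |t| / √(2π). -/
/-!
The densities of `N(a, v)` and `N(b, v)` with `a ≤ b` cross at the midpoint `c = (a + b) / 2`,
so for every measurable `A` the difference `N(a, v)(A) - N(b, v)(A)` is largest for `A = (-∞, c]`.
Translating `N(b, v)` back to `N(a, v)`, that maximum is the `N(a, v)`-mass of an interval of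
length `b - a`, hence at most `(b - a)` times the peak density `1 / √(2πv)`. Passing to
complements bounds the difference with the opposite sign.
-/

open MeasureTheory ProbabilityTheory
open scoped ENNReal

open Set Real NNReal

theorem setIntegral_le_setIntegral_of_nonneg_of_nonpos_compl {α : Type*} [MeasurableSpace α]
    {μ : Measure α} {f : α → ℝ} (hf : Integrable f μ) {s t : Set α} (hs : MeasurableSet s)
    (ht : MeasurableSet t) (hf_nonneg : ∀ x ∈ t, 0 ≤ f x) (hf_nonpos : ∀ x ∉ t, f x ≤ 0) :
    ∫ x in s, f x ∂μ ≤ ∫ x in t, f x ∂μ := by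
  rw [← integral_indicator hs, ← integral_indicator ht]
  refine integral_mono (hf.indicator hs) (hf.indicator ht) fun x => ?_
  by_cases hxs : x ∈ s <;> by_cases hxt : x ∈ t <;>
    simp [hxs, hxt, hf_nonneg, hf_nonpos]

lemma gaussianPDFReal_le (μ : ℝ) (v : ℝ≥0) (x : ℝ) :
    gaussianPDFReal μ v x ≤ (√(2 * π * v))⁻¹ := by
  refine mul_le_of_le_one_right (by positivity) (exp_le_one_iff.2 ?_)
  exact div_nonpos_of_nonpos_of_nonneg (neg_nonpos.2 (sq_nonneg _)) (by positivity)

lemma gaussianPDFReal_le_gaussianPDFReal_of_abs_sub_le {a b x : ℝ} (v : ℝ≥0)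
    (h : |x - a| ≤ |x - b|) : gaussianPDFReal b v x ≤ gaussianPDFReal a v x := by
  unfold gaussianPDFReal
  gcongr _ * rexp (-?_ / _)
  exact sq_le_sq.2 h

lemma gaussianReal_real_apply (μ : ℝ) {v : ℝ≥0} (hv : v ≠ 0) (s : Set ℝ) :
    (gaussianReal μ v).real s = ∫ x in s, gaussianPDFReal μ v x := by
  rw [measureReal_def, gaussianReal_apply_eq_integral μ hv, ENNReal.toReal_ofReal]
  exact setIntegral_nonneg_of_ae (ae_of_all _ (gaussianPDFReal_nonneg μ v))

lemma gaussianReal_real_le_volume_real (μ : ℝ) {v : ℝ≥0} (hv : v ≠ 0) {s : Set ℝ}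
    (hs : volume s ≠ ∞) : (gaussianReal μ v).real s ≤ volume.real s / √(2 * π * v) := by
  rw [gaussianReal_real_apply μ hv, div_eq_mul_inv, ← smul_eq_mul, ← setIntegral_const]
  exact setIntegral_mono (integrable_gaussianPDFReal μ v).integrableOn
    (integrableOn_const hs) (gaussianPDFReal_le μ v)

lemma gaussianReal_real_Iic_eq (a b : ℝ) (v : ℝ≥0) (c : ℝ) :
    (gaussianReal b v).real (Iic c) = (gaussianReal a v).real (Iic (c - (b - a))) := by
  have hmap := gaussianReal_map_add_const (μ := a) (v := v) (b - a)
  rw [add_sub_cancel] at hmap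
  rw [← hmap, map_measureReal_apply (measurable_add_const _) measurableSet_Iic,
    preimage_add_const_Iic]

lemma gaussianReal_real_sub_le_of_le {a b : ℝ} {v : ℝ≥0} (hv : v ≠ 0) (hab : a ≤ b)
    {A : Set ℝ} (hA : MeasurableSet A) :
    (gaussianReal a v).real A - (gaussianReal b v).real A ≤ (b - a) / √(2 * π * v) := by
  have hint := (integrable_gaussianPDFReal a v).sub (integrable_gaussianPDFReal b v)
  have hdiff (s : Set ℝ) : (gaussianReal a v).real s - (gaussianReal b v).real s
      = ∫ x in s, (gaussianPDFReal a v x - gaussianPDFReal b v x) := by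
    rw [gaussianReal_real_apply a hv, gaussianReal_real_apply b hv,
      integral_sub (integrable_gaussianPDFReal a v).integrableOn
        (integrable_gaussianPDFReal b v).integrableOn]
  calc (gaussianReal a v).real A - (gaussianReal b v).real A
      ≤ (gaussianReal a v).real (Iic ((a + b) / 2))
          - (gaussianReal b v).real (Iic ((a + b) / 2)) := by
        rw [hdiff, hdiff]
        refine setIntegral_le_setIntegral_of_nonneg_of_nonpos_compl hint hA measurableSet_Iic
          (fun x hx => sub_nonneg.2 ?_) (fun x hx => sub_nonpos.2 ?_)
        · rw [mem_Iic] at hx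
          refine gaussianPDFReal_le_gaussianPDFReal_of_abs_sub_le v (sq_le_sq.1 ?_)
          nlinarith
        · rw [mem_Iic, not_le] at hx
          refine gaussianPDFReal_le_gaussianPDFReal_of_abs_sub_le v (sq_le_sq.1 ?_)
          nlinarith
    _ = (gaussianReal a v).real (Ioc ((a + b) / 2 - (b - a)) ((a + b) / 2)) := by
        rw [gaussianReal_real_Iic_eq a b, ← Iic_sdiff_Iic,
          measureReal_sdiff (Iic_subset_Iic.2 (by linarith)) measurableSet_Iic]
    _ ≤ (b - a) / √(2 * π * v) := by
        refine (gaussianReal_real_le_volume_real a hv measure_Ioc_lt_top.ne).trans_eq ?_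
        rw [volume_real_Ioc_of_le (by linarith)]
        ring

lemma abs_gaussianReal_real_sub_le (a b : ℝ) {v : ℝ≥0} (hv : v ≠ 0) {A : Set ℝ}
    (hA : MeasurableSet A) :
    |(gaussianReal a v).real A - (gaussianReal b v).real A| ≤ |b - a| / √(2 * π * v) := by
  wlog hab : a ≤ b
  · rw [abs_sub_comm, abs_sub_comm b]
    exact this b a hv hA (le_of_not_ge hab)
  rw [abs_of_nonneg (sub_nonneg.2 hab), abs_sub_le_iff]
  refine ⟨gaussianReal_real_sub_le_of_le hv hab hA, ?_⟩
  have hcompl := gaussianReal_real_sub_le_of_le hv hab hA.compl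
  rw [probReal_compl_eq_one_sub hA, probReal_compl_eq_one_sub hA] at hcompl
  linarith

theorem tvDist_gaussianReal_le_s5 (a b : ℝ) {v : ℝ≥0} (hv : v ≠ 0) :
    tvDist (gaussianReal a v) (gaussianReal b v) ≤ |b - a| / √(2 * π * v) :=
  ciSup_le fun A => abs_gaussianReal_real_sub_le a b hv A.2

/-- For `Z` standard Normal and `t ∈ ℝ`,
`d_TV(Z, Z + t) ≤ |t| / √(2π)`. -/
theorem stmt5 (t : ℝ) :
    tvDist (gaussianReal 0 1) (gaussianReal t 1) ≤ |t| / Real.sqrt (2 * Real.pi) := by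
  simpa using tvDist_gaussianReal_le_s5 0 t one_ne_zero
end

section
/- Fix an integer J ≥ 1 and reals α > 0, Σ₀ > 0 and Ȳ. Let G ~ Gamma(α + J/2, 1) and Z ~ N(0,1) be independent, and for x > 0 define the random variable D_x = G · J² · |Ȳ/(xJ+1) − Z/√(xJ+1)| · |Ȳ/(xJ+1)² − Z/(2(xJ+1)^{3/2})| / (Σ₀ + (J/2)(Ȳ/(xJ+1) − Z/√(xJ+1))²)². Then for every x > 0, E[D_x] ≤ r₂, where r₂ = (α + J/2) · (J²/Σ₀²) · (|Ȳ| + 1) · (|Ȳ| + 1/2). -/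
/-!
Since `t = xJ + 1 ≥ 1`, the denominator of `D_x` is at least `Σ₀²` and the two absolute values
are at most `|Ȳ| + |Z|` and `|Ȳ| + |Z|/2`. Bounding the cross term with `2|Z| ≤ 1 + Z²` gives
`D_x ≤ G · (J²/Σ₀²) (P + Q Z²)` with `P + Q = (|Ȳ| + 1)(|Ȳ| + 1/2)`, and by independence the
expectation of the right-hand side is `E[G] · (J²/Σ₀²)(P + Q E[Z²]) = r₂`.
-/

open MeasureTheory ProbabilityTheory Real
open scoped ENNReal NNReal

lemma ofReal_mul_gammaPDF {a r : ℝ} (ha : 0 < a) (hr : 0 < r) (y : ℝ) :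
    ENNReal.ofReal y * gammaPDF a r y = ENNReal.ofReal (a / r) * gammaPDF (a + 1) r y := by
  rcases lt_or_ge y 0 with hy | hy
  · simp [gammaPDF_of_neg hy]
  rw [gammaPDF_of_nonneg hy, gammaPDF_of_nonneg hy, ← ENNReal.ofReal_mul hy,
    ← ENNReal.ofReal_mul (div_pos ha hr).le, Gamma_add_one ha.ne', rpow_add_one hr.ne',
    add_sub_cancel_right]
  congr 1
  have hya : y ^ a = y ^ (a - 1) * y := by
    simpa using rpow_add_one' hy (show a - 1 + 1 ≠ 0 by simpa using ha.ne')
  rw [hya]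
  field_simp

lemma lintegral_ofReal_gammaMeasure {a r : ℝ} (ha : 0 < a) (hr : 0 < r) :
    ∫⁻ y, ENNReal.ofReal y ∂gammaMeasure a r = ENNReal.ofReal (a / r) := by
  rw [gammaMeasure, lintegral_withDensity_eq_lintegral_mul _
    (show Measurable (gammaPDF a r) by unfold gammaPDF; fun_prop) ENNReal.measurable_ofReal]
  simp_rw [Pi.mul_apply, mul_comm (gammaPDF a r _), ofReal_mul_gammaPDF ha hr]
  rw [lintegral_const_mul' _ _ ENNReal.ofReal_ne_top,
    lintegral_gammaPDF_eq_one (by linarith) hr, mul_one]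

lemma lintegral_ofReal_sq_sub_gaussianReal (μ : ℝ) (v : ℝ≥0) :
    ∫⁻ z, ENNReal.ofReal ((z - μ) ^ 2) ∂gaussianReal μ v = v := by
  have h := evariance_eq_lintegral_ofReal id (gaussianReal μ v)
  rw [← ofReal_variance (memLp_id_gaussianReal 2), variance_id_gaussianReal] at h
  simpa [integral_id_gaussianReal] using h.symm

lemma lintegral_ofReal_add_mul_sq_gaussianReal {A B : ℝ} (hA : 0 ≤ A) (hB : 0 ≤ B) (v : ℝ≥0) :
    ∫⁻ z, ENNReal.ofReal (A + B * z ^ 2) ∂gaussianReal 0 v = ENNReal.ofReal (A + B * v) := by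
  have hsplit (z : ℝ) : ENNReal.ofReal (A + B * z ^ 2)
      = ENNReal.ofReal A + ENNReal.ofReal B * ENNReal.ofReal ((z - 0) ^ 2) := by
    rw [sub_zero, ENNReal.ofReal_add hA (by positivity), ENNReal.ofReal_mul hB]
  simp_rw [hsplit]
  rw [lintegral_add_left measurable_const, lintegral_const_mul' _ _ ENNReal.ofReal_ne_top,
    lintegral_ofReal_sq_sub_gaussianReal, ENNReal.ofReal_add hA (by positivity),
    ENNReal.ofReal_mul hB]
  simp

lemma abs_div_sub_div_le {a b s u : ℝ} (hs : 1 ≤ s) (hu : 1 ≤ u) :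
    |a / s - b / u| ≤ |a| + |b| :=
  calc |a / s - b / u| ≤ |a / s| + |b / u| := abs_sub _ _
    _ = |a| / s + |b| / u := by
      rw [abs_div, abs_div, abs_of_pos (by linarith : 0 < s), abs_of_pos (by linarith : 0 < u)]
    _ ≤ |a| + |b| := add_le_add (div_le_self (abs_nonneg a) hs) (div_le_self (abs_nonneg b) hu)

/-- `D_x = G · lipschitzFactor J Σ₀ Ȳ (xJ + 1) Z`. -/
noncomputable def lipschitzFactor (J S₀ Y t z : ℝ) : ℝ :=
  J ^ 2 * |Y / t - z / √t| * |Y / t ^ 2 - z / (2 * t ^ ((3 : ℝ) / 2))| /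
    (S₀ + J / 2 * (Y / t - z / √t) ^ 2) ^ 2

lemma lipschitzFactor_nonneg (J S₀ Y t z : ℝ) : 0 ≤ lipschitzFactor J S₀ Y t z := by
  unfold lipschitzFactor
  positivity

lemma lipschitzFactor_le {J S₀ Y t : ℝ} (hJ : 0 ≤ J) (hS₀ : 0 < S₀) (ht : 1 ≤ t) (z : ℝ) :
    lipschitzFactor J S₀ Y t z ≤
      J ^ 2 / S₀ ^ 2 * (|Y| * (|Y| + 3 / 4)) + J ^ 2 / S₀ ^ 2 * (3 / 4 * |Y| + 1 / 2) * z ^ 2 := by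
  have h₁ : |Y / t - z / √t| ≤ |Y| + |z| :=
    abs_div_sub_div_le ht (one_le_sqrt.2 ht)
  have h₂ : |Y / t ^ 2 - z / (2 * t ^ ((3 : ℝ) / 2))| ≤ |Y| + |z / 2| := by
    rw [← div_div]
    exact abs_div_sub_div_le (one_le_pow₀ ht) (one_le_rpow ht (by norm_num))
  have hden : S₀ ^ 2 ≤ (S₀ + J / 2 * (Y / t - z / √t) ^ 2) ^ 2 := by
    gcongr
    exact le_add_of_nonneg_right (by positivity)
  have hquad : (|Y| + |z|) * (|Y| + |z / 2|) ≤
      |Y| * (|Y| + 3 / 4) + (3 / 4 * |Y| + 1 / 2) * z ^ 2 := by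
    rw [abs_div, abs_two]
    nlinarith [sq_nonneg (|z| - 1), sq_abs z, abs_nonneg Y]
  calc lipschitzFactor J S₀ Y t z ≤ J ^ 2 * (|Y| + |z|) * (|Y| + |z / 2|) / S₀ ^ 2 := by
        unfold lipschitzFactor
        gcongr
    _ = J ^ 2 / S₀ ^ 2 * ((|Y| + |z|) * (|Y| + |z / 2|)) := by ring
    _ ≤ _ := by
        rw [mul_assoc _ _ (z ^ 2), ← mul_add]
        gcongr

theorem stmt11_general (J : ℕ) (α S₀ Ybar : ℝ) (hα : 0 < α) (hS₀ : 0 < S₀)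
    (D : ℝ → ℝ × ℝ → ℝ)
    (hD : ∀ x gz, D x gz =
      gz.1 * (J : ℝ) ^ 2 *
        |Ybar / (x * J + 1) - gz.2 / Real.sqrt (x * J + 1)| *
        |Ybar / (x * J + 1) ^ 2 - gz.2 / (2 * (x * J + 1) ^ ((3 : ℝ) / 2))| /
        (S₀ + ((J : ℝ) / 2) * (Ybar / (x * J + 1) - gz.2 / Real.sqrt (x * J + 1)) ^ 2) ^ 2)
    (r₂ : ℝ)
    (hr₂ : r₂ = (α + (J : ℝ) / 2) * ((J : ℝ) ^ 2 / S₀ ^ 2) * (|Ybar| + 1) * (|Ybar| + 1 / 2))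
    (x : ℝ) (hx : 0 < x) :
    ∫⁻ gz, ENNReal.ofReal (D x gz)
        ∂((gammaMeasure (α + J / 2) 1).prod (gaussianReal 0 1))
      ≤ ENNReal.ofReal r₂ := by
  set P := (J : ℝ) ^ 2 / S₀ ^ 2 * (|Ybar| * (|Ybar| + 3 / 4))
  set Q := (J : ℝ) ^ 2 / S₀ ^ 2 * (3 / 4 * |Ybar| + 1 / 2)
  have ht : 1 ≤ x * J + 1 := le_add_of_nonneg_left (by positivity)
  have hbound (gz : ℝ × ℝ) :
      ENNReal.ofReal (D x gz) ≤ ENNReal.ofReal gz.1 * ENNReal.ofReal (P + Q * gz.2 ^ 2) := by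
    have hDgz : D x gz = gz.1 * lipschitzFactor J S₀ Ybar (x * J + 1) gz.2 := by
      rw [hD, lipschitzFactor]
      ring
    rw [hDgz, ENNReal.ofReal_mul' (lipschitzFactor_nonneg ..)]
    gcongr
    exact (lipschitzFactor_le (by positivity) hS₀ ht gz.2).trans_eq (by ring)
  calc _ ≤ ∫⁻ gz, ENNReal.ofReal gz.1 * ENNReal.ofReal (P + Q * gz.2 ^ 2)
          ∂((gammaMeasure (α + J / 2) 1).prod (gaussianReal 0 1)) := lintegral_mono hbound
    _ = ENNReal.ofReal ((α + J / 2) / 1) * ENNReal.ofReal (P + Q * (1 : ℝ≥0)) := by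
        rw [lintegral_prod_mul (f := ENNReal.ofReal) (g := fun z ↦ ENNReal.ofReal (P + Q * z ^ 2))
            (by fun_prop) (by fun_prop),
          lintegral_ofReal_gammaMeasure (by positivity) one_pos,
          lintegral_ofReal_add_mul_sq_gaussianReal (by positivity) (by positivity)]
    _ = ENNReal.ofReal r₂ := by
        rw [← ENNReal.ofReal_mul (by positivity), hr₂]
        congr 1
        push_cast
        ring

/-- The expected local Lipschitz constant `E[D_x]` of the
random map defining the Gibbs sampler chain `P₁` (case `K = 1`) is at most
`r₂ = (α + J/2)(J²/Σ₀²)(|Ȳ| + 1)(|Ȳ| + 1/2)` for every `x > 0`. -/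
theorem stmt11 (J : ℕ) (hJ : 1 ≤ J) (α S₀ Ybar : ℝ) (hα : 0 < α) (hS₀ : 0 < S₀)
    (D : ℝ → ℝ × ℝ → ℝ)
    (hD : ∀ x gz, D x gz =
      gz.1 * (J : ℝ) ^ 2 *
        |Ybar / (x * J + 1) - gz.2 / Real.sqrt (x * J + 1)| *
        |Ybar / (x * J + 1) ^ 2 - gz.2 / (2 * (x * J + 1) ^ ((3 : ℝ) / 2))| /
        (S₀ + ((J : ℝ) / 2) * (Ybar / (x * J + 1) - gz.2 / Real.sqrt (x * J + 1)) ^ 2) ^ 2)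
    (r₂ : ℝ)
    (hr₂ : r₂ = (α + (J : ℝ) / 2) * ((J : ℝ) ^ 2 / S₀ ^ 2) * (|Ybar| + 1) * (|Ybar| + 1 / 2))
    (x : ℝ) (hx : 0 < x) :
    ∫⁻ gz, ENNReal.ofReal (D x gz)
        ∂((gammaMeasure (α + J / 2) 1).prod (gaussianReal 0 1))
      ≤ ENNReal.ofReal r₂ :=
  stmt11_general J α S₀ Ybar hα hS₀ D hD r₂ hr₂ x hx
end

section
/- Let χ be a measurable space, let A₁, …, A_n be a measurable partition of χ, let b : χ → (0,∞) be measurable, and let μ₁, …, μ_n be non-zero finite measures on χ with b integrable with respect to each μ_i. Define the operator L̃ on nonnegative measurable functions by L̃φ(x) = b(x) · Σ_{i=1}^n 1_{A_i}(x) ∫_χ φ dμ_i, and define the n×n matrix Q by Q(i,j) = ∫_{A_j} b dμ_i. Let r > 0. Then: (1) there exists a measurable function φ : χ → (0,∞), integrable with respect to each μ_i, with L̃φ(x) ≤ r·φ(x) for all x, if and only if there exists a vector p ∈ ℝ^n with p_i > 0 for all i and (Qp)_i ≤ r·p_i for all i; (2) moreover, if p is such a vector, then the function φ(x) = Σ_{j=1}^n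 p_j 1_{A_j}(x) b(x) (and any positive multiple of it) satisfies L̃φ(x) ≤ r·φ(x) for all x. -/
open MeasureTheory
open scoped ENNReal BigOperators

/-- The operator `L̃φ(x) = b(x) Σᵢ 1_{Aᵢ}(x) ∫ φ dμᵢ`. -/
noncomputable def Lop {χ : Type*} [MeasurableSpace χ] {n : ℕ} (A : Fin n → Set χ)
    (b : χ → ℝ) (μ : Fin n → Measure χ) (φ : χ → ℝ) (x : χ) : ℝ :=
  b x * ∑ i, Set.indicator (A i) (fun _ => ∫ z, φ z ∂(μ i)) x

/-- `L̃` has an `r`-sub-eigenfunction iff the matrix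
`Q(i,j) = ∫_{A_j} b dμᵢ` has an `r`-sub-eigenvector `p`; moreover any such `p`
yields the sub-eigenfunction `φ(x) = Σⱼ pⱼ 1_{Aⱼ}(x) b(x)` (up to positive
multiples). -/
theorem stmt16 {χ : Type*} [MeasurableSpace χ] (n : ℕ) (hn : 0 < n)
    (A : Fin n → Set χ) (hAmeas : ∀ i, MeasurableSet (A i))
    (hAdisj : Pairwise (Function.onFun Disjoint A))
    (hAcover : (⋃ i, A i) = Set.univ)
    (b : χ → ℝ) (hb : Measurable b) (hbpos : ∀ x, 0 < b x)
    (μ : Fin n → Measure χ) [∀ i, IsFiniteMeasure (μ i)] (hμne : ∀ i, μ i ≠ 0)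
    (hbint : ∀ i, Integrable b (μ i))
    (Q : Fin n → Fin n → ℝ) (hQ : ∀ i j, Q i j = ∫ x in A j, b x ∂(μ i))
    (r : ℝ) (hr : 0 < r) :
    ((∃ φ : χ → ℝ, Measurable φ ∧ (∀ x, 0 < φ x) ∧ (∀ i, Integrable φ (μ i)) ∧
        ∀ x, Lop A b μ φ x ≤ r * φ x) ↔
      (∃ p : Fin n → ℝ, (∀ i, 0 < p i) ∧ ∀ i, ∑ j, Q i j * p j ≤ r * p i)) ∧
    (∀ p : Fin n → ℝ, (∀ i, 0 < p i) → (∀ i, ∑ j, Q i j * p j ≤ r * p i) →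
      ∀ c : ℝ, 0 < c → ∀ x,
        Lop A b μ (fun w => c * ((∑ j, Set.indicator (A j) (fun _ => p j) w) * b w)) x
          ≤ r * (c * ((∑ j, Set.indicator (A j) (fun _ => p j) x) * b x))) := by

  -- every point lies in some `A k`
  have hmem : ∀ x : χ, ∃ k, x ∈ A k := by
    intro x
    have : x ∈ ⋃ i, A i := by rw [hAcover]; trivial
    exact Set.mem_iUnion.mp this
  -- sum over a partition collapses to the value at the unique piece
  have hsum : ∀ (g : Fin n → ℝ) (x : χ) (k : Fin n), x ∈ A k →
      ∑ i, Set.indicator (A i) (fun _ => g i) x = g k := by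
    intro g x k hk
    rw [Finset.sum_eq_single k]
    · simp [Set.indicator_of_mem hk]
    · intro j _ hjk
      exact Set.indicator_of_notMem (fun hj => (hAdisj hjk).le_bot ⟨hj, hk⟩) _
    · simp
  -- rewriting the candidate function as a sum of indicators
  have hφeq : ∀ (c : ℝ) (p : Fin n → ℝ),
      (fun w => c * ((∑ j, Set.indicator (A j) (fun _ => p j) w) * b w))
        = fun w => ∑ j, Set.indicator (A j) (fun z => c * p j * b z) w := by
    intro c p
    funext w
    rw [Finset.sum_mul, Finset.mul_sum]
    refine Finset.sum_congr rfl (fun j _ => ?_)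
    by_cases h : w ∈ A j <;>
      simp [Set.indicator_of_mem, Set.indicator_of_notMem, h] <;> ring
  have hintble : ∀ (c : ℝ) (p : Fin n → ℝ) (i : Fin n),
      Integrable (fun w => ∑ j, Set.indicator (A j) (fun z => c * p j * b z) w) (μ i) :=
    fun c p i => integrable_finset_sum _
      (fun j _ => (((hbint i).const_mul (c * p j)).indicator (hAmeas j)))
  have hintQ : ∀ (c : ℝ) (p : Fin n → ℝ) (i : Fin n),
      ∫ z, (∑ j, Set.indicator (A j) (fun w => c * p j * b w) z) ∂(μ i)
        = ∑ j, c * p j * Q i j := by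
    intro c p i
    rw [integral_finset_sum _
      (fun j _ => (((hbint i).const_mul (c * p j)).indicator (hAmeas j)))]
    refine Finset.sum_congr rfl (fun j _ => ?_)
    rw [integral_indicator (hAmeas j), hQ, integral_const_mul]
  -- Part 2
  have hpart2 : ∀ p : Fin n → ℝ, (∀ i, 0 < p i) → (∀ i, ∑ j, Q i j * p j ≤ r * p i) →
      ∀ c : ℝ, 0 < c → ∀ x,
        Lop A b μ (fun w => c * ((∑ j, Set.indicator (A j) (fun _ => p j) w) * b w)) x
          ≤ r * (c * ((∑ j, Set.indicator (A j) (fun _ => p j) x) * b x)) := by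
    intro p hp hsub c hc x
    obtain ⟨k, hk⟩ := hmem x
    have hInt : ∫ z, (c * ((∑ j, Set.indicator (A j) (fun _ => p j) z) * b z)) ∂(μ k)
        = c * ∑ j, Q k j * p j := by
      have := hintQ c p k
      rw [show (fun z => c * ((∑ j, Set.indicator (A j) (fun _ => p j) z) * b z))
            = fun w => ∑ j, Set.indicator (A j) (fun z => c * p j * b z) w from hφeq c p]
      rw [this, Finset.mul_sum]
      exact Finset.sum_congr rfl (fun j _ => by ring)
    have hL : Lop A b μ (fun w => c * ((∑ j, Set.indicator (A j) (fun _ => p j) w) * b w)) x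
        = b x * (c * ∑ j, Q k j * p j) := by
      unfold Lop
      rw [hsum (fun i => ∫ z, (c * ((∑ j, Set.indicator (A j) (fun _ => p j) z) * b z)) ∂(μ i)) x k hk]
      rw [hInt]
    rw [hL, hsum p x k hk]
    have hb0 : 0 ≤ b x := (hbpos x).le
    have := hsub k
    nlinarith [mul_le_mul_of_nonneg_left this (mul_nonneg hc.le hb0)]
  constructor
  · constructor
    · -- forward direction
      rintro ⟨φ, hφm, hφpos, hφint, hφL⟩
      refine ⟨fun i => ∫ z, φ z ∂(μ i), ?_, ?_⟩
      · intro i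
        rw [integral_pos_iff_support_of_nonneg (fun x => (hφpos x).le) (hφint i)]
        have : Function.support φ = Set.univ := by
          ext x; simp [Function.support, (hφpos x).ne']
        rw [this]
        simpa [Measure.measure_univ_pos] using hμne i
      · intro i
        have hLeq : Lop A b μ φ = fun x =>
            ∑ j, Set.indicator (A j) (fun z => (∫ w, φ w ∂(μ j)) * b z) x := by
          funext x
          unfold Lop
          rw [Finset.mul_sum]
          refine Finset.sum_congr rfl (fun j _ => ?_)
          by_cases h : x ∈ A j <;>
            simp [Set.indicator_of_mem, Set.indicator_of_notMem, h] <;> ring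
        have hLint : Integrable (Lop A b μ φ) (μ i) := by
          rw [hLeq]
          exact integrable_finset_sum _
            (fun j _ => (((hbint i).const_mul _).indicator (hAmeas j)))
        have hmono : ∫ x, Lop A b μ φ x ∂(μ i) ≤ ∫ x, r * φ x ∂(μ i) :=
          integral_mono hLint ((hφint i).const_mul r) hφL
        have hLval : ∫ x, Lop A b μ φ x ∂(μ i)
            = ∑ j, Q i j * ∫ z, φ z ∂(μ j) := by
          rw [hLeq, integral_finset_sum _
            (fun j _ => (((hbint i).const_mul _).indicator (hAmeas j)))]
          refine Finset.sum_congr rfl (fun j _ => ?_)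
          rw [integral_indicator (hAmeas j), hQ, integral_const_mul]
          ring
        rw [hLval, integral_const_mul] at hmono
        exact hmono
    · -- backward direction
      rintro ⟨p, hp, hsub⟩
      refine ⟨fun w => (∑ j, Set.indicator (A j) (fun _ => p j) w) * b w, ?_, ?_, ?_, ?_⟩
      · exact (Finset.measurable_sum _
          (fun j _ => (measurable_const.indicator (hAmeas j)))).mul hb
      · intro x
        obtain ⟨k, hk⟩ := hmem x
        show 0 < (∑ j, Set.indicator (A j) (fun _ => p j) x) * b x
        rw [hsum p x k hk]
        exact mul_pos (hp k) (hbpos x)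
      · intro i
        have : (fun w => (∑ j, Set.indicator (A j) (fun _ => p j) w) * b w)
            = fun w => ∑ j, Set.indicator (A j) (fun z => (1:ℝ) * p j * b z) w := by
          have := hφeq 1 p
          simpa using this
        rw [this]
        exact hintble 1 p i
      · intro x
        have h2 := hpart2 p hp hsub 1 one_pos x
        simpa using h2
  · exact hpart2
end
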